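/- arXiv:1607.00366 — 4 statements merged into one kernel-verified Lean document; each statement's English description precedes it below -/
import Mathlib

section
/- Let E ⊆ {1,…,m} and suppose G_E H⁻¹ G_Eᵀ is invertible (LICQ: the rows of G indexed by E are linearly independent). If z*(x), λ*(x) satisfy H z*(x) + G_Eᵀ λ_E*(x) = 0 and G_E z*(x) = W_E + S_E x (active constraints hold with equality, inactive multipliers are zero), then λ_E*(x) = −(G_E H⁻¹ G_Eᵀ)⁻¹ (W_E + S_E x), an affine function of x. -/
open Matrix

/-- Under LICQ on the active set `E` (so that `G_E H⁻¹ G_Eᵀ` is invertible), the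
KKT system `H z* + G_Eᵀ λ_E* = 0`, `G_E z* = W_E + S_E x` determines the active
multipliers as the affine function
`λ_E*(x) = -(G_E H⁻¹ G_Eᵀ)⁻¹ (W_E + S_E x)`. -/
theorem qp_active_multipliers_affine (s n m : ℕ)
    (H : Matrix (Fin s) (Fin s) ℝ) (G : Matrix (Fin m) (Fin s) ℝ)
    (W : Fin m → ℝ) (S : Matrix (Fin m) (Fin n) ℝ) (x : Fin n → ℝ)
    (hH : H.PosDef) (hHsymm : H.IsSymm)
    (E : Finset (Fin m))
    (GE : Matrix E (Fin s) ℝ) (hGE : GE = G.submatrix (Subtype.val) id)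
    (WE : E → ℝ) (hWE : WE = fun i => W i.1)
    (SE : Matrix E (Fin n) ℝ) (hSE : SE = S.submatrix (Subtype.val) id)
    (hLICQ : IsUnit (GE * H⁻¹ * GEᵀ))
    (zs : Fin s → ℝ) (lamE : E → ℝ)
    (hstat : H.mulVec zs + GEᵀ.mulVec lamE = 0)
    (hact : GE.mulVec zs = WE + SE.mulVec x) :
    lamE = -((GE * H⁻¹ * GEᵀ)⁻¹.mulVec (WE + SE.mulVec x)) := by
  have hHdet : IsUnit H.det := (Matrix.isUnit_iff_isUnit_det H).mp hH.isUnit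
  have hHinv : H⁻¹ * H = 1 := Matrix.nonsing_inv_mul H hHdet
  -- zs = -(H⁻¹ * GEᵀ).mulVec lamE
  have hzs : zs = -(H⁻¹.mulVec (GEᵀ.mulVec lamE)) := by
    have h1 : H.mulVec zs = -(GEᵀ.mulVec lamE) := by
      have := hstat
      rw [add_eq_zero_iff_eq_neg] at this
      exact this
    calc zs = (H⁻¹ * H).mulVec zs := by rw [hHinv, Matrix.one_mulVec]
      _ = H⁻¹.mulVec (H.mulVec zs) := by rw [Matrix.mulVec_mulVec]
      _ = -(H⁻¹.mulVec (GEᵀ.mulVec lamE)) := by rw [h1, Matrix.mulVec_neg]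
  have key : (GE * H⁻¹ * GEᵀ).mulVec lamE = -(WE + SE.mulVec x) := by
    have : GE.mulVec zs = -((GE * H⁻¹ * GEᵀ).mulVec lamE) := by
      rw [hzs, Matrix.mulVec_neg, Matrix.mulVec_mulVec, Matrix.mulVec_mulVec,
        Matrix.mul_assoc]
    rw [this] at hact
    rw [← hact, neg_neg]
  have hMinv : (GE * H⁻¹ * GEᵀ)⁻¹ * (GE * H⁻¹ * GEᵀ) = 1 :=
    Matrix.nonsing_inv_mul _ (Matrix.isUnit_iff_isUnit_det _ |>.mp hLICQ)
  calc lamE = ((GE * H⁻¹ * GEᵀ)⁻¹ * (GE * H⁻¹ * GEᵀ)).mulVec lamE := by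
        rw [hMinv, Matrix.one_mulVec]
    _ = (GE * H⁻¹ * GEᵀ)⁻¹.mulVec ((GE * H⁻¹ * GEᵀ).mulVec lamE) := by
        rw [Matrix.mulVec_mulVec]
    _ = -((GE * H⁻¹ * GEᵀ)⁻¹.mulVec (WE + SE.mulVec x)) := by
        rw [key, Matrix.mulVec_neg]
end

section
/- Under LICQ on an active set E, the optimizer of the mpQP on the critical region is the affine function z*(x) = H⁻¹ G_Eᵀ (G_E H⁻¹ G_Eᵀ)⁻¹ (W_E + S_E x). -/
open Matrix

/-- Under LICQ on the active set `E`, the optimizer of the mpQP on the critical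
region is the affine function
`z*(x) = H⁻¹ G_Eᵀ (G_E H⁻¹ G_Eᵀ)⁻¹ (W_E + S_E x)`. -/
theorem qp_optimizer_affine (s n e : ℕ)
    (H : Matrix (Fin s) (Fin s) ℝ)
    (GE : Matrix (Fin e) (Fin s) ℝ) (WE : Fin e → ℝ) (SE : Matrix (Fin e) (Fin n) ℝ)
    (x : Fin n → ℝ)
    (hH : H.PosDef) (hHsymm : H.IsSymm)
    (hLICQ : IsUnit (GE * H⁻¹ * GEᵀ))
    (zs : Fin s → ℝ) (lamE : Fin e → ℝ)
    (hstat : H.mulVec zs + GEᵀ.mulVec lamE = 0)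
    (hact : GE.mulVec zs = WE + SE.mulVec x) :
    zs = H⁻¹.mulVec (GEᵀ.mulVec ((GE * H⁻¹ * GEᵀ)⁻¹.mulVec (WE + SE.mulVec x))) := by
  have hHinvH : H⁻¹ * H = 1 := nonsing_inv_mul H ((isUnit_iff_isUnit_det H).mp hH.isUnit)
  set M := GE * H⁻¹ * GEᵀ with hM
  have hMinvM : M⁻¹ * M = 1 := nonsing_inv_mul M ((isUnit_iff_isUnit_det M).mp hLICQ)
  have h1 : H.mulVec zs = -(GEᵀ.mulVec lamE) := eq_neg_of_add_eq_zero_left hstat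
  have h2 : zs = -(H⁻¹.mulVec (GEᵀ.mulVec lamE)) := by
    calc zs = (H⁻¹ * H).mulVec zs := by rw [hHinvH, one_mulVec]
    _ = H⁻¹.mulVec (H.mulVec zs) := by rw [mulVec_mulVec]
    _ = -(H⁻¹.mulVec (GEᵀ.mulVec lamE)) := by rw [h1, mulVec_neg]
  have h3 : M.mulVec lamE = -(WE + SE.mulVec x) := by
    have : GE.mulVec zs = -(M.mulVec lamE) := by
      rw [h2, mulVec_neg, hM, mulVec_mulVec, mulVec_mulVec]
    rw [this] at hact
    rw [← hact, neg_neg]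
  have h4 : lamE = -(M⁻¹.mulVec (WE + SE.mulVec x)) := by
    calc lamE = (M⁻¹ * M).mulVec lamE := by rw [hMinvM, one_mulVec]
    _ = M⁻¹.mulVec (M.mulVec lamE) := by rw [mulVec_mulVec]
    _ = -(M⁻¹.mulVec (WE + SE.mulVec x)) := by rw [h3, mulVec_neg]
  rw [h2, h4, mulVec_neg, mulVec_neg, neg_neg]
end

section
/- Under LICQ on the active set E, the value function of the mpQP restricted to the critical region is the quadratic V(x) = ½ (W_E + S_E x)ᵀ (G_E H⁻¹ G_Eᵀ)⁻¹ (W_E + S_E x), and its gradient is ∇ₓV(x) = S_Eᵀ (G_E H⁻¹ G_Eᵀ)⁻¹ (W_E + S_E x) = −S_Eᵀ λ_E*(x). -/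
/-!
With `M = G H⁻¹ Gᵀ` and `v = W + S x`, the point `z = H⁻¹ Gᵀ M⁻¹ v` satisfies `G z = v` and
`H z = Gᵀ M⁻¹ v`, so `zᵀ H z = (G z)ᵀ M⁻¹ v = vᵀ M⁻¹ v`. Since `H`, hence `M⁻¹`, is symmetric,
the derivative of `½ vᵀ M⁻¹ v` along the affine map `x ↦ W + S x` is `w ↦ (Sᵀ M⁻¹ v)ᵀ w`.
-/

namespace Matrix

theorem IsSymm.mul_mul_transpose {m n α : Type*} [Fintype n] [CommSemiring α]
    {A : Matrix n n α} (hA : A.IsSymm) (B : Matrix m n α) : (B * A * Bᵀ).IsSymm := by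
  simp only [IsSymm, transpose_mul, transpose_transpose, hA.eq, Matrix.mul_assoc]

variable {m n α : Type*} [Fintype m] [Fintype n]

theorem dotProduct_mulVec_inv_mul_mul_transpose [DecidableEq m] [DecidableEq n] [CommRing α]
    {H : Matrix n n α} {G : Matrix m n α} (hH : IsUnit H.det)
    (hM : IsUnit (G * H⁻¹ * Gᵀ).det) (v : m → α) :
    (H⁻¹ *ᵥ Gᵀ *ᵥ (G * H⁻¹ * Gᵀ)⁻¹ *ᵥ v) ⬝ᵥ H *ᵥ (H⁻¹ *ᵥ Gᵀ *ᵥ (G * H⁻¹ * Gᵀ)⁻¹ *ᵥ v)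
      = v ⬝ᵥ (G * H⁻¹ * Gᵀ)⁻¹ *ᵥ v := by
  set w := (G * H⁻¹ * Gᵀ)⁻¹ *ᵥ v
  set z := H⁻¹ *ᵥ Gᵀ *ᵥ w
  have hHz : H *ᵥ z = Gᵀ *ᵥ w := by
    rw [mulVec_mulVec, mul_nonsing_inv _ hH, one_mulVec]
  have hGz : G *ᵥ z = v := by
    simp only [z, w, mulVec_mulVec, ← Matrix.mul_assoc, mul_nonsing_inv _ hM, one_mulVec]
  calc z ⬝ᵥ H *ᵥ z = z ⬝ᵥ Gᵀ *ᵥ w := by rw [hHz]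
    _ = (G *ᵥ z) ⬝ᵥ w := by rw [dotProduct_mulVec, vecMul_transpose]
    _ = v ⬝ᵥ w := by rw [hGz]

theorem IsSymm.dotProduct_mulVec_comm [CommSemiring α] {N : Matrix m m α} (hN : N.IsSymm)
    (u v : m → α) : u ⬝ᵥ N *ᵥ v = v ⬝ᵥ N *ᵥ u := by
  rw [dotProduct_mulVec, ← mulVec_transpose, hN.eq, dotProduct_comm]

theorem exists_hasFDerivAt_half_dotProduct_mulVec_affine [DecidableEq m] {N : Matrix m m ℝ}
    (hN : N.IsSymm) (a : m → ℝ) (S : Matrix m n ℝ) (x : n → ℝ) :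
    ∃ L : (n → ℝ) →L[ℝ] ℝ,
      HasFDerivAt (fun y => (1/2) * ((a + S *ᵥ y) ⬝ᵥ N *ᵥ (a + S *ᵥ y))) L x ∧
        ∀ w, L w = (Sᵀ *ᵥ N *ᵥ (a + S *ᵥ x)) ⬝ᵥ w := by
  set B := (toLinearMap₂' ℝ N : (m → ℝ) →ₗ[ℝ] (m → ℝ) →ₗ[ℝ] ℝ).toContinuousBilinearMap
  have hB : ∀ u v, B u v = u ⬝ᵥ N *ᵥ v := toLinearMap₂'_apply' N
  set S' := LinearMap.toContinuousLinearMap S.mulVecLin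
  have hS : HasFDerivAt (fun y => a + S *ᵥ y) S' x := S'.hasFDerivAt.const_add a
  have hf := (B.hasFDerivAt_of_bilinear hS hS).const_mul (1/2)
  simp only [hB] at hf
  refine ⟨_, hf, fun w => ?_⟩
  have hS' : S' w = S *ᵥ w := rfl
  set u := a + S *ᵥ x
  calc _ = 1/2 * (u ⬝ᵥ N *ᵥ (S *ᵥ w) + (S *ᵥ w) ⬝ᵥ N *ᵥ u) := by
        simp only [hB, hS', _root_.smul_apply, _root_.add_apply, ContinuousLinearMap.precompR_apply,
          ContinuousLinearMap.compL_apply, ContinuousLinearMap.precompL_apply,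
          ContinuousLinearMap.comp_apply, smul_eq_mul]
    _ = (S *ᵥ w) ⬝ᵥ N *ᵥ u := by rw [hN.dotProduct_mulVec_comm u]; ring
    _ = (Sᵀ *ᵥ N *ᵥ u) ⬝ᵥ w := by rw [dotProduct_comm, dotProduct_mulVec, mulVec_transpose]

end Matrix

open Matrix

theorem qp_value_function_quadratic_general (s n e : ℕ)
    (H : Matrix (Fin s) (Fin s) ℝ)
    (GE : Matrix (Fin e) (Fin s) ℝ) (WE : Fin e → ℝ) (SE : Matrix (Fin e) (Fin n) ℝ)
    (hH : H.PosDef)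
    (hLICQ : IsUnit (GE * H⁻¹ * GEᵀ))
    (zstar : (Fin n → ℝ) → (Fin s → ℝ))
    (hzstar : zstar = fun x =>
      H⁻¹.mulVec (GEᵀ.mulVec ((GE * H⁻¹ * GEᵀ)⁻¹.mulVec (WE + SE.mulVec x))))
    (lamE : (Fin n → ℝ) → (Fin e → ℝ))
    (hlamE : lamE = fun x => -((GE * H⁻¹ * GEᵀ)⁻¹.mulVec (WE + SE.mulVec x)))
    (V : (Fin n → ℝ) → ℝ)
    (hV : V = fun x => (1/2) * (zstar x ⬝ᵥ H.mulVec (zstar x))) :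
    ∀ x : Fin n → ℝ,
      V x = (1/2) * ((WE + SE.mulVec x) ⬝ᵥ (GE * H⁻¹ * GEᵀ)⁻¹.mulVec (WE + SE.mulVec x)) ∧
      (∃ L : (Fin n → ℝ) →L[ℝ] ℝ, HasFDerivAt V L x ∧
        ∀ w : Fin n → ℝ,
          L w = (SEᵀ.mulVec ((GE * H⁻¹ * GEᵀ)⁻¹.mulVec (WE + SE.mulVec x))) ⬝ᵥ w) ∧
      SEᵀ.mulVec ((GE * H⁻¹ * GEᵀ)⁻¹.mulVec (WE + SE.mulVec x))
        = -(SEᵀ.mulVec (lamE x)) := by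
  intro x
  have hHdet : IsUnit H.det := (isUnit_iff_isUnit_det H).mp hH.isUnit
  have hMdet : IsUnit (GE * H⁻¹ * GEᵀ).det := (isUnit_iff_isUnit_det _).mp hLICQ
  have hHsymm : H.IsSymm := isHermitian_iff_isSymm.mp hH.isHermitian
  have hNsymm : (GE * H⁻¹ * GEᵀ)⁻¹.IsSymm := (hHsymm.inv.mul_mul_transpose GE).inv
  have hVeq : V = fun y =>
      (1/2) * ((WE + SE *ᵥ y) ⬝ᵥ (GE * H⁻¹ * GEᵀ)⁻¹ *ᵥ (WE + SE *ᵥ y)) := by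
    funext y
    rw [hV, hzstar]
    exact congrArg (1/2 * ·) (dotProduct_mulVec_inv_mul_mul_transpose hHdet hMdet _)
  obtain ⟨L, hL, hLw⟩ := exists_hasFDerivAt_half_dotProduct_mulVec_affine hNsymm WE SE x
  refine ⟨congrFun hVeq x, ⟨L, hVeq ▸ hL, hLw⟩, ?_⟩
  rw [hlamE, mulVec_neg, neg_neg]

/-- Under LICQ on the active set `E`, the value function of the mpQP on the
critical region is the quadratic
`V(x) = ½ (W_E + S_E x)ᵀ (G_E H⁻¹ G_Eᵀ)⁻¹ (W_E + S_E x)`, and its gradient is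
`∇ₓV(x) = S_Eᵀ (G_E H⁻¹ G_Eᵀ)⁻¹ (W_E + S_E x) = -S_Eᵀ λ_E*(x)`. -/
theorem qp_value_function_quadratic (s n e : ℕ)
    (H : Matrix (Fin s) (Fin s) ℝ)
    (GE : Matrix (Fin e) (Fin s) ℝ) (WE : Fin e → ℝ) (SE : Matrix (Fin e) (Fin n) ℝ)
    (hH : H.PosDef) (hHsymm : H.IsSymm)
    (hLICQ : IsUnit (GE * H⁻¹ * GEᵀ))
    (zstar : (Fin n → ℝ) → (Fin s → ℝ))
    (hzstar : zstar = fun x =>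
      H⁻¹.mulVec (GEᵀ.mulVec ((GE * H⁻¹ * GEᵀ)⁻¹.mulVec (WE + SE.mulVec x))))
    (lamE : (Fin n → ℝ) → (Fin e → ℝ))
    (hlamE : lamE = fun x => -((GE * H⁻¹ * GEᵀ)⁻¹.mulVec (WE + SE.mulVec x)))
    (V : (Fin n → ℝ) → ℝ)
    (hV : V = fun x => (1/2) * (zstar x ⬝ᵥ H.mulVec (zstar x))) :
    ∀ x : Fin n → ℝ,
      V x = (1/2) * ((WE + SE.mulVec x) ⬝ᵥ (GE * H⁻¹ * GEᵀ)⁻¹.mulVec (WE + SE.mulVec x)) ∧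
      (∃ L : (Fin n → ℝ) →L[ℝ] ℝ, HasFDerivAt V L x ∧
        ∀ w : Fin n → ℝ,
          L w = (SEᵀ.mulVec ((GE * H⁻¹ * GEᵀ)⁻¹.mulVec (WE + SE.mulVec x))) ⬝ᵥ w) ∧
      SEᵀ.mulVec ((GE * H⁻¹ * GEᵀ)⁻¹.mulVec (WE + SE.mulVec x))
        = -(SEᵀ.mulVec (lamE x)) :=
  qp_value_function_quadratic_general s n e H GE WE SE hH hLICQ zstar hzstar lamE hlamE V hV
end

section
/- Suppose λ* : ℝⁿ → ℝᵐ is differentiable at x with V(x) = −½ λ*(x)ᵀ G H⁻¹ Gᵀ λ*(x) − λ*(x)ᵀ(W + S x) near x, and for each i either Gᵢ z*(x') − Wᵢ − Sᵢ x' = 0 for all x' near x, or λᵢ*(x') = 0 for all x' near x, where z*(x) = −H⁻¹ Gᵀ λ*(x). Then ∇ₓV(x) = −Sᵀ λ*(x). -/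
/-!
Write `M = G H⁻¹ Gᵀ`, symmetric because `H` is. Along `y ↦ (λ*(y), y)` the dual objective
`-½ μᵀ M μ - μᵀ (W + S y)` has derivative `-(M λ* + W + S x) ⬝ Dλ* w - Sᵀ λ* ⬝ w`. The vector
`-(M λ* + W + S x)` is the constraint residual `G z* - W - S x`, so complementarity kills the first
term entry by entry: an active constraint has zero residual at `x`, and an inactive multiplier is
locally zero, hence has zero derivative.
-/

open Matrix Filter Topology

section

variable {𝕜 E ι : Type*} [NontriviallyNormedField 𝕜] [NormedAddCommGroup E] [NormedSpace 𝕜 E]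
  [Fintype ι]

noncomputable def Matrix.dotProductCLM (v : ι → 𝕜) : (ι → 𝕜) →L[𝕜] 𝕜 :=
  ∑ i, v i • ContinuousLinearMap.proj i

@[simp]
theorem Matrix.dotProductCLM_apply (v w : ι → 𝕜) : dotProductCLM v w = v ⬝ᵥ w := by
  simp [dotProductCLM, dotProduct]

def Matrix.mulVecCLM {κ : Type*} [Fintype κ] (A : Matrix ι κ 𝕜) : (κ → 𝕜) →L[𝕜] ι → 𝕜 :=
  ⟨mulVecLin A, continuous_const.matrix_mulVec continuous_id⟩

omit [Fintype ι] in
@[simp]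
theorem Matrix.mulVecCLM_apply {κ : Type*} [Fintype κ] (A : Matrix ι κ 𝕜) (v : κ → 𝕜) :
    mulVecCLM A v = A *ᵥ v :=
  rfl

theorem HasFDerivAt.dotProduct {f g : E → ι → 𝕜} {f' g' : E →L[𝕜] ι → 𝕜} {x : E}
    (hf : HasFDerivAt f f' x) (hg : HasFDerivAt g g' x) :
    HasFDerivAt (fun y => f y ⬝ᵥ g y)
      ((dotProductCLM (f x)).comp g' + (dotProductCLM (g x)).comp f') x := by
  refine (HasFDerivAt.fun_sum (u := Finset.univ) fun i _ =>
    (hasFDerivAt_pi'.1 hf i).mul (hasFDerivAt_pi'.1 hg i)).congr_fderiv ?_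
  ext w
  simp [dotProductCLM, Finset.sum_add_distrib]

theorem HasFDerivAt.dotProduct_mulVec_self {f : E → ι → 𝕜} {f' : E →L[𝕜] ι → 𝕜} {x : E}
    {M : Matrix ι ι 𝕜} (hM : Mᵀ = M) (hf : HasFDerivAt f f' x) :
    HasFDerivAt (fun y => f y ⬝ᵥ M *ᵥ f y) ((2 : 𝕜) • (dotProductCLM (M *ᵥ f x)).comp f') x := by
  refine (hf.dotProduct ((mulVecCLM M).hasFDerivAt.comp x hf)).congr_fderiv ?_
  ext w
  simp only [_root_.add_apply, _root_.smul_apply, ContinuousLinearMap.comp_apply,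
    Function.comp_apply, mulVecCLM_apply, dotProductCLM_apply, smul_eq_mul]
  rw [dotProduct_mulVec, ← mulVec_transpose, hM, two_mul]

omit [Fintype ι] in
theorem HasFDerivAt.apply_eq_zero_of_eventually_eq_zero {F : Type*} [NormedAddCommGroup F]
    [NormedSpace 𝕜 F] {f : E → ι → F} {f' : E →L[𝕜] ι → F} {x : E} (hf : HasFDerivAt f f' x)
    {i : ι} (h : ∀ᶠ y in 𝓝 x, f y i = 0) (w : E) : f' w i = 0 := by
  have hzero := (hasFDerivAt_pi'.1 hf i).unique ((hasFDerivAt_const 0 x).congr_of_eventuallyEq h)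
  simpa using congr($hzero w)

end

theorem Matrix.dotProduct_eq_zero_of_forall_or {ι R : Type*} [Fintype ι]
    [NonUnitalNonAssocSemiring R] {a b : ι → R} (h : ∀ i, a i = 0 ∨ b i = 0) : a ⬝ᵥ b = 0 :=
  Finset.sum_eq_zero fun i _ => by rcases h i with h | h <;> simp [h]

section QP

variable {ι κ : Type*} [Fintype ι] [Fintype κ]

noncomputable def qpDualObjective (M : Matrix ι ι ℝ) (W : ι → ℝ) (S : Matrix ι κ ℝ)
    (μ : ι → ℝ) (y : κ → ℝ) : ℝ :=
  -(1 / 2) * (μ ⬝ᵥ M *ᵥ μ) - μ ⬝ᵥ (W + S *ᵥ y)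

theorem HasFDerivAt.qpDualObjective {M : Matrix ι ι ℝ} (hM : Mᵀ = M) (W : ι → ℝ)
    (S : Matrix ι κ ℝ) {lam : (κ → ℝ) → ι → ℝ} {Dl : (κ → ℝ) →L[ℝ] ι → ℝ} {x : κ → ℝ}
    (hl : HasFDerivAt lam Dl x) :
    HasFDerivAt (fun y => qpDualObjective M W S (lam y) y)
      (-(dotProductCLM (M *ᵥ lam x + W + S *ᵥ x)).comp Dl - dotProductCLM (Sᵀ *ᵥ lam x)) x := by
  have hquad := (hl.dotProduct_mulVec_self hM).const_mul (-(1 / 2) : ℝ)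
  have hlin := hl.dotProduct ((mulVecCLM S).hasFDerivAt.const_add W)
  refine (hquad.sub hlin).congr_fderiv ?_
  ext w
  simp only [_root_.sub_apply, _root_.add_apply, _root_.neg_apply, _root_.smul_apply,
    ContinuousLinearMap.comp_apply, mulVecCLM_apply, dotProductCLM_apply, smul_eq_mul]
  rw [dotProduct_mulVec, ← mulVec_transpose]
  simp only [add_dotProduct]
  ring

end QP

theorem qp_value_gradient_general (s n m : ℕ)
    (H : Matrix (Fin s) (Fin s) ℝ) (G : Matrix (Fin m) (Fin s) ℝ)
    (W : Fin m → ℝ) (S : Matrix (Fin m) (Fin n) ℝ)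
    (hHsymm : H.IsSymm)
    (lam : (Fin n → ℝ) → (Fin m → ℝ)) (x : Fin n → ℝ)
    (Dl : (Fin n → ℝ) →L[ℝ] (Fin m → ℝ))
    (hl : HasFDerivAt lam Dl x)
    (zstar : (Fin n → ℝ) → (Fin s → ℝ))
    (hzstar : zstar = fun x' => -(H⁻¹.mulVec (Gᵀ.mulVec (lam x'))))
    (V : (Fin n → ℝ) → ℝ)
    (hV : ∀ᶠ x' in nhds x,
      V x' = -(1/2) * (lam x' ⬝ᵥ (G * H⁻¹ * Gᵀ).mulVec (lam x'))
               - lam x' ⬝ᵥ (W + S.mulVec x'))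
    (hcomp : ∀ i : Fin m,
      (∀ᶠ x' in nhds x, G.mulVec (zstar x') i - W i - S.mulVec x' i = 0) ∨
      (∀ᶠ x' in nhds x, lam x' i = 0)) :
    ∃ L : (Fin n → ℝ) →L[ℝ] ℝ, HasFDerivAt V L x ∧
      ∀ w : Fin n → ℝ, L w = -(Sᵀ.mulVec (lam x)) ⬝ᵥ w := by
  have hM : (G * H⁻¹ * Gᵀ)ᵀ = G * H⁻¹ * Gᵀ := by
    rw [transpose_mul, transpose_mul, transpose_transpose, transpose_nonsing_inv, hHsymm.eq,
      Matrix.mul_assoc]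
  have hGz : G *ᵥ zstar x = -((G * H⁻¹ * Gᵀ) *ᵥ lam x) := by
    simp [hzstar, mulVec_neg, mulVec_mulVec, Matrix.mul_assoc]
  refine ⟨_, (hl.qpDualObjective hM W S).congr_of_eventuallyEq hV, fun w => ?_⟩
  have hslack : ((G * H⁻¹ * Gᵀ) *ᵥ lam x + W + S *ᵥ x) ⬝ᵥ Dl w = 0 := by
    refine dotProduct_eq_zero_of_forall_or fun i => (hcomp i).imp (fun hact => ?_)
      (fun hinact => hl.apply_eq_zero_of_eventually_eq_zero hinact w)
    have hresidual := congrFun hGz i ▸ hact.self_of_nhds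
    simp only [Pi.add_apply, Pi.neg_apply] at hresidual ⊢
    linarith
  simp [hslack]

/-- Differentiating the dual expression of the mpQP value function: if `λ*` is
differentiable at `x`, `V` agrees near `x` with the dual objective evaluated at
`λ*`, and for each constraint `i` either the constraint is active
(`Gᵢ z*(x') = Wᵢ + Sᵢ x'`) near `x` or `λᵢ*` vanishes near `x` (where
`z*(x') = -H⁻¹ Gᵀ λ*(x')`), then `∇ₓV(x) = -Sᵀ λ*(x)`. -/
theorem qp_value_gradient (s n m : ℕ)
    (H : Matrix (Fin s) (Fin s) ℝ) (G : Matrix (Fin m) (Fin s) ℝ)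
    (W : Fin m → ℝ) (S : Matrix (Fin m) (Fin n) ℝ)
    (hH : H.PosDef) (hHsymm : H.IsSymm)
    (lam : (Fin n → ℝ) → (Fin m → ℝ)) (x : Fin n → ℝ)
    (Dl : (Fin n → ℝ) →L[ℝ] (Fin m → ℝ))
    (hl : HasFDerivAt lam Dl x)
    (zstar : (Fin n → ℝ) → (Fin s → ℝ))
    (hzstar : zstar = fun x' => -(H⁻¹.mulVec (Gᵀ.mulVec (lam x'))))
    (V : (Fin n → ℝ) → ℝ)
    (hV : ∀ᶠ x' in nhds x,
      V x' = -(1/2) * (lam x' ⬝ᵥ (G * H⁻¹ * Gᵀ).mulVec (lam x'))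
               - lam x' ⬝ᵥ (W + S.mulVec x'))
    (hcomp : ∀ i : Fin m,
      (∀ᶠ x' in nhds x, G.mulVec (zstar x') i - W i - S.mulVec x' i = 0) ∨
      (∀ᶠ x' in nhds x, lam x' i = 0)) :
    ∃ L : (Fin n → ℝ) →L[ℝ] ℝ, HasFDerivAt V L x ∧
      ∀ w : Fin n → ℝ, L w = -(Sᵀ.mulVec (lam x)) ⬝ᵥ w :=
  qp_value_gradient_general s n m H G W S hHsymm lam x Dl hl zstar hzstar V hV hcomp
end
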